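/- arXiv:cs/0508024 — 2 statements merged into one kernel-verified Lean document; each statement's English description precedes it below -/
import Mathlib

section
/- Let q = 2^h, h > p, r ≥ p, let I = {i_0,...,i_{m-k-1}} and J = {j_0,...,j_{k-1}} partition {0,1,...,m-1}, let L_{2^h}(k,m) be the linear code of all vectors associated with functions of the form Σ_{α=0}^{m-k-1} x_{i_α}·g_α(x_{j_0},...,x_{j_{k-1}}) + g'(x_{j_0},...,x_{j_{k-1}}), and let A_{2^h}^p(k,r,m) = L_{2^h}(k,m) ∩ ZRM_{2^h}^p(r,m). Then log_2 |A_{2^h}^p(k,r,m)| = Σ_{i=0}^{r-p} h·C(k,i) + Σ_{i=1}^{p} (h-i)·C(k, i+r-p) + (m-k)·( Σ_{i=0}^{r-p-1} h·C(k,i) + Σ_{i=1}^{p} (h-i)·C(k, i+r-p-1) ), where C(k,i) denotes the binomial coefficient. -/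
open Finset

/-- The binary expansion of `i`, as a point of `ℤ₂^m`. -/
def bits (m : ℕ) (i : ℕ) : Fin m → ZMod 2 := fun j => if Nat.testBit i j.val then 1 else 0

/-- Admissibility condition on ANF coefficients for `ZRM_{2^h}^p(r,m)`. -/
def zrmCond (h p r m : ℕ) (c : Finset (Fin m) → ZMod (2 ^ h)) : Prop :=
  ∀ S : Finset (Fin m),
    (r < S.card → c S = 0) ∧
    (r - p < S.card → S.card ≤ r →
      ∃ u : ZMod (2 ^ h), c S = 2 ^ (S.card - (r - p)) * u)

/-- The vector of length `2^m` associated with the generalized Boolean function having ANF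
coefficients `c`. -/
def anfVec (h m : ℕ) (c : Finset (Fin m) → ZMod (2 ^ h)) : Fin (2 ^ m) → ZMod (2 ^ h) :=
  fun i => ∑ S : Finset (Fin m), c S * ∏ α ∈ S, ((bits m i.val α).val : ZMod (2 ^ h))

/-- The code `ZRM_{2^h}^p(r,m)`. -/
def ZRM (h p r m : ℕ) : Set (Fin (2 ^ m) → ZMod (2 ^ h)) :=
  {v | ∃ c : Finset (Fin m) → ZMod (2 ^ h), zrmCond h p r m c ∧ v = anfVec h m c}

/-- The linear code `L_{2^h}(k,m)`: all vectors associated with functions of the form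
`∑_α x_{i_α}·g_α(x_{j_0},…,x_{j_{k-1}}) + g'(x_{j_0},…,x_{j_{k-1}})`. -/
def LCode (h m k : ℕ) (iI : ℕ → Fin m) (jJ : Fin k → Fin m) :
    Set (Fin (2 ^ m) → ZMod (2 ^ h)) :=
  {v | ∃ (g : ℕ → (Fin k → ZMod 2) → ZMod (2 ^ h)) (g' : (Fin k → ZMod 2) → ZMod (2 ^ h)),
    v = fun i =>
      (∑ α ∈ Finset.range (m - k),
          ((bits m i.val (iI α)).val : ZMod (2 ^ h)) * g α (fun b => bits m i.val (jJ b)))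
        + g' (fun b => bits m i.val (jJ b))}

set_option linter.unusedSectionVars false

section ANF
variable {R : Type*} [CommRing R] {ι : Type*} [Fintype ι] [DecidableEq ι]

/-- indicator point of a finset -/
def indic (U : Finset ι) : ι → ZMod 2 := fun b => if b ∈ U then 1 else 0

/-- support of a point -/
def suppF (y : ι → ZMod 2) : Finset ι := univ.filter (fun b => y b = 1)

lemma zmod2_cases (x : ZMod 2) : x = 0 ∨ x = 1 := by
  fin_cases x
  · exact Or.inl rfl
  · exact Or.inr rfl

lemma mem_suppF {y : ι → ZMod 2} {b : ι} : b ∈ suppF y ↔ y b = 1 := by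
  simp [suppF]

lemma indic_suppF (y : ι → ZMod 2) : indic (suppF y) = y := by
  funext b
  rcases zmod2_cases (y b) with h | h <;>
    simp [indic, mem_suppF, h]

lemma suppF_indic (U : Finset ι) : suppF (indic U) = U := by
  ext b
  by_cases hb : b ∈ U <;> simp [mem_suppF, indic, hb]

lemma prod_supp (y : ι → ZMod 2) (S : Finset ι) :
    (∏ b ∈ S, ((y b).val : R)) = if S ⊆ suppF y then 1 else 0 := by
  by_cases hS : S ⊆ suppF y
  · rw [if_pos hS]
    apply Finset.prod_eq_one
    intro b hb
    have : y b = 1 := mem_suppF.1 (hS hb)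
    rw [this]; norm_num [ZMod.val_one]
  · rw [if_neg hS]
    obtain ⟨b, hb, hb'⟩ := Finset.not_subset.1 hS
    apply Finset.prod_eq_zero hb
    have : y b = 0 := by
      rcases zmod2_cases (y b) with h | h
      · exact h
      · exact absurd (mem_suppF.2 h) hb'
    rw [this]; simp

lemma eval_anf (c : Finset ι → R) (y : ι → ZMod 2) :
    (∑ S : Finset ι, c S * ∏ b ∈ S, ((y b).val : R)) = ∑ S ∈ (suppF y).powerset, c S := by
  have : ∀ S : Finset ι, c S * ∏ b ∈ S, ((y b).val : R)
      = if S ∈ (suppF y).powerset then c S else 0 := by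
    intro S
    rw [prod_supp]
    by_cases hS : S ⊆ suppF y
    · rw [if_pos hS, if_pos (Finset.mem_powerset.2 hS), mul_one]
    · rw [if_neg hS, if_neg (fun hm => hS (Finset.mem_powerset.1 hm)), mul_zero]
  rw [Finset.sum_congr rfl (fun S _ => this S), Finset.sum_ite_mem, Finset.univ_inter]

lemma zeta_eq_zero {c : Finset ι → R}
    (h : ∀ Y : Finset ι, ∑ S ∈ Y.powerset, c S = 0) : ∀ Y, c Y = 0 := by
  intro Y
  induction Y using Finset.strongInduction with
  | _ Y ih =>
    have h0 := h Y
    have hY : Y ∈ Y.powerset := Finset.mem_powerset_self Y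
    rw [← Finset.sum_erase_add _ _ hY] at h0
    have : ∑ S ∈ Y.powerset.erase Y, c S = 0 := by
      apply Finset.sum_eq_zero
      intro S hS
      obtain ⟨hne, hsub⟩ := Finset.mem_erase.1 hS
      exact ih S (lt_of_le_of_ne (Finset.mem_powerset.1 hsub) hne)
    rw [this, zero_add] at h0
    exact h0

noncomputable def anfC (g : (ι → ZMod 2) → R) : Finset ι → R
  | T => g (indic T) - ∑ U ∈ (T.powerset.erase T).attach, anfC g U.1
termination_by T => T.card
decreasing_by
  obtain ⟨hne, hsub⟩ := Finset.mem_erase.1 U.2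
  exact Finset.card_lt_card (lt_of_le_of_ne (Finset.mem_powerset.1 hsub) hne)

lemma anfC_zeta (g : (ι → ZMod 2) → R) (Y : Finset ι) :
    ∑ S ∈ Y.powerset, anfC g S = g (indic Y) := by
  have hY : Y ∈ Y.powerset := Finset.mem_powerset_self Y
  rw [← Finset.sum_erase_add _ _ hY, anfC, Finset.sum_attach]
  ring

lemma anf_expand (g : (ι → ZMod 2) → R) (y : ι → ZMod 2) :
    g y = ∑ S : Finset ι, anfC g S * ∏ b ∈ S, ((y b).val : R) := by
  rw [eval_anf, anfC_zeta, indic_suppF]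

end ANF

/-- every point of `(Fin m → ZMod 2)` is realized by some `i : Fin (2^m)` -/
lemma exists_point (m : ℕ) (y : Fin m → ZMod 2) :
    ∃ i : Fin (2 ^ m), ∀ α, bits m i.val α = y α := by
  classical
  set f : Fin m → Fin 2 := fun a => if y a = 1 then 1 else 0 with hf
  refine ⟨finFunctionFinEquiv f, fun α => ?_⟩
  have h1 : ((finFunctionFinEquiv.symm (finFunctionFinEquiv f)) α : ℕ)
      = (finFunctionFinEquiv f).val / 2 ^ (α : ℕ) % 2 := by
    simp [finFunctionFinEquiv]
  rw [Equiv.symm_apply_apply] at h1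
  have h2 : Nat.testBit (finFunctionFinEquiv f).val α.val
      = decide ((finFunctionFinEquiv f).val / 2 ^ (α:ℕ) % 2 = 1) := Nat.testBit_eq_decide_div_mod_eq
  rw [← h1] at h2
  rcases zmod2_cases (y α) with h | h
  · have hfa : f α = 0 := by simp [hf, h]
    rw [h, bits]
    simp only [h2, hfa]
    norm_num
  · have hfa : f α = 1 := by simp [hf, h]
    rw [h, bits]
    simp only [h2, hfa]
    norm_num

lemma anfVec_eval (h m : ℕ) (c : Finset (Fin m) → ZMod (2^h)) (i : Fin (2^m)) :
    anfVec h m c i = ∑ S ∈ (suppF (fun α => bits m i.val α)).powerset, c S :=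
  eval_anf c _

lemma anfVec_inj (h m : ℕ) {c c' : Finset (Fin m) → ZMod (2^h)}
    (hcc : anfVec h m c = anfVec h m c') : c = c' := by
  have key : ∀ Y : Finset (Fin m), ∑ S ∈ Y.powerset, (c S - c' S) = 0 := by
    intro Y
    obtain ⟨i, hi⟩ := exists_point m (indic Y)
    have hsupp : suppF (fun α => bits m i.val α) = Y := by
      have : (fun α => bits m i.val α) = indic Y := funext hi
      rw [this, suppF_indic]
    have := congrFun hcc i
    rw [anfVec_eval, anfVec_eval, hsupp] at this
    rw [Finset.sum_sub_distrib, this, sub_self]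
  funext Y
  exact sub_eq_zero.mp (zeta_eq_zero key Y)

section Split
variable {M : Type*} [AddCommMonoid M] {m k : ℕ} {iI : ℕ → Fin m} {jJ : Fin k → Fin m}

/-- the set `J` of indices -/
def Jset (jJ : Fin k → Fin m) : Finset (Fin m) := univ.image jJ

lemma mem_Jset {jJ : Fin k → Fin m} {x : Fin m} : x ∈ Jset jJ ↔ ∃ b, jJ b = x := by
  simp [Jset]

lemma preimage_image (hjInj : Function.Injective jJ) (T : Finset (Fin k)) :
    (T.image jJ).preimage jJ hjInj.injOn = T := by
  apply Finset.coe_injective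
  rw [Finset.coe_preimage, Finset.coe_image, Set.preimage_image_eq _ hjInj]

lemma image_preimage' (hjInj : Function.Injective jJ) {S : Finset (Fin m)}
    (hS : S ⊆ Jset jJ) : (S.preimage jJ hjInj.injOn).image jJ = S := by
  classical
  rw [Finset.image_preimage]
  apply Finset.filter_true_of_mem
  intro x hx
  obtain ⟨b, hb⟩ := mem_Jset.1 (hS hx)
  exact ⟨b, hb⟩

lemma insert_sdiff_J {x : Fin m} {B : Finset (Fin m)} (hx : x ∉ Jset jJ)
    (hB : B ⊆ Jset jJ) : (insert x B) \ Jset jJ = {x} := by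
  ext z
  simp only [Finset.mem_sdiff, Finset.mem_insert, Finset.mem_singleton]
  constructor
  · rintro ⟨hz | hz, hzJ⟩
    · exact hz
    · exact absurd (hB hz) hzJ
  · rintro rfl
    exact ⟨Or.inl rfl, hx⟩

lemma insert_inter_J {x : Fin m} {B : Finset (Fin m)} (hx : x ∉ Jset jJ)
    (hB : B ⊆ Jset jJ) : (insert x B) ∩ Jset jJ = B := by
  ext z
  simp only [Finset.mem_inter, Finset.mem_insert]
  constructor
  · rintro ⟨hz | hz, hzJ⟩
    · exact absurd (hz ▸ hzJ) hx
    · exact hz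
  · intro hz
    exact ⟨Or.inr hz, hB hz⟩

lemma split_sum (hjInj : Function.Injective jJ)
    (hiInj : Set.InjOn iI (Set.Iio (m - k)))
    (hdisj : ∀ a < m - k, ∀ b : Fin k, iI a ≠ jJ b)
    (hcover : ∀ v : Fin m, (∃ a < m - k, iI a = v) ∨ ∃ b : Fin k, jJ b = v)
    (Y : Finset (Fin m)) (c : Finset (Fin m) → M)
    (hc : ∀ S, 2 ≤ (S \ Jset jJ).card → c S = 0) :
    ∑ S ∈ Y.powerset, c S =
      (∑ T ∈ (Y.preimage jJ hjInj.injOn).powerset, c (T.image jJ))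
      + ∑ a ∈ (Finset.range (m - k)).filter (fun a => iI a ∈ Y),
          ∑ T ∈ (Y.preimage jJ hjInj.injOn).powerset, c (insert (iI a) (T.image jJ)) := by
  classical
  have hiIJ : ∀ a, a < m - k → iI a ∉ Jset jJ := by
    intro a ha hmem
    obtain ⟨b, hb⟩ := mem_Jset.1 hmem
    exact hdisj a ha b hb.symm
  rw [← Finset.sum_filter_add_sum_filter_not Y.powerset (fun S => S ⊆ Jset jJ) c]
  congr 1
  · -- part I
    apply Finset.sum_nbij' (fun S => S.preimage jJ hjInj.injOn) (fun T => T.image jJ)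
    · intro S hS
      rw [Finset.mem_powerset]
      intro b hb
      rw [Finset.mem_preimage] at hb ⊢
      exact (Finset.mem_powerset.1 (Finset.mem_filter.1 hS).1) hb
    · intro T hT
      rw [Finset.mem_powerset] at hT
      rw [Finset.mem_filter, Finset.mem_powerset]
      constructor
      · intro x hx
        obtain ⟨b, hb, rfl⟩ := Finset.mem_image.1 hx
        exact Finset.mem_preimage.1 (hT hb)
      · intro x hx
        obtain ⟨b, _, rfl⟩ := Finset.mem_image.1 hx
        exact mem_Jset.2 ⟨b, rfl⟩
    · intro S hS
      exact image_preimage' hjInj (Finset.mem_filter.1 hS).2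
    · intro T _
      exact preimage_image hjInj T
    · intro S hS
      rw [image_preimage' hjInj (Finset.mem_filter.1 hS).2]
  · -- part II
    have hne : ∀ S ∈ Y.powerset.filter (fun S => ¬ S ⊆ Jset jJ), c S ≠ 0 →
        (S \ Jset jJ).card = 1 := by
      intro S hS hcS
      have h1 : (S \ Jset jJ).Nonempty := by
        rw [Finset.sdiff_nonempty]
        exact (Finset.mem_filter.1 hS).2
      have h2 : ¬ 2 ≤ (S \ Jset jJ).card := fun hh => hcS (hc S hh)
      have := Finset.card_pos.2 h1
      omega
    rw [← Finset.sum_filter_of_ne hne, Finset.filter_filter]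
    have heq : Y.powerset.filter (fun S => ¬ S ⊆ Jset jJ ∧ (S \ Jset jJ).card = 1)
        = Y.powerset.filter (fun S => (S \ Jset jJ).card = 1) := by
      apply Finset.filter_congr
      intro S _
      constructor
      · exact fun hS => hS.2
      · intro hS
        refine ⟨?_, hS⟩
        intro hsub
        rw [← Finset.sdiff_eq_empty_iff_subset] at hsub
        rw [hsub] at hS
        simp at hS
    rw [heq]
    rw [← Finset.sum_product']
    symm
    apply Finset.sum_bij (fun p _ => insert (iI p.1) (p.2.image jJ))
    · rintro ⟨a, T⟩ hp
      rw [Finset.mem_product, Finset.mem_filter, Finset.mem_range, Finset.mem_powerset] at hp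
      obtain ⟨⟨ha, haY⟩, hT⟩ := hp
      have himJ : T.image jJ ⊆ Jset jJ := by
        intro x hx
        obtain ⟨b, _, rfl⟩ := Finset.mem_image.1 hx
        exact mem_Jset.2 ⟨b, rfl⟩
      rw [Finset.mem_filter, Finset.mem_powerset]
      constructor
      · apply Finset.insert_subset haY
        intro x hx
        obtain ⟨b, hb, rfl⟩ := Finset.mem_image.1 hx
        exact Finset.mem_preimage.1 (hT hb)
      · rw [insert_sdiff_J (hiIJ a ha) himJ, Finset.card_singleton]
    · rintro ⟨a1, T1⟩ hp1 ⟨a2, T2⟩ hp2 heq'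
      rw [Finset.mem_product, Finset.mem_filter, Finset.mem_range] at hp1 hp2
      have himJ1 : T1.image jJ ⊆ Jset jJ := by
        intro x hx; obtain ⟨b, _, rfl⟩ := Finset.mem_image.1 hx; exact mem_Jset.2 ⟨b, rfl⟩
      have himJ2 : T2.image jJ ⊆ Jset jJ := by
        intro x hx; obtain ⟨b, _, rfl⟩ := Finset.mem_image.1 hx; exact mem_Jset.2 ⟨b, rfl⟩
      have hd : ({iI a1} : Finset (Fin m)) = {iI a2} := by
        rw [← insert_sdiff_J (hiIJ a1 hp1.1.1) himJ1, ← insert_sdiff_J (hiIJ a2 hp2.1.1) himJ2,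
          heq']
      have ha : a1 = a2 := by
        apply hiInj hp1.1.1 hp2.1.1
        exact Finset.singleton_injective hd
      have hT : T1 = T2 := by
        apply Finset.image_injective hjInj
        rw [← insert_inter_J (hiIJ a1 hp1.1.1) himJ1, ← insert_inter_J (hiIJ a2 hp2.1.1) himJ2,
          heq']
      exact Prod.ext ha hT
    · intro S hS
      rw [Finset.mem_filter, Finset.mem_powerset] at hS
      obtain ⟨hSY, hS1⟩ := hS
      obtain ⟨x, hx⟩ := Finset.card_eq_one.1 hS1
      have hxS : x ∈ S ∧ x ∉ Jset jJ := by
        have : x ∈ S \ Jset jJ := hx ▸ Finset.mem_singleton_self x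
        exact ⟨(Finset.mem_sdiff.1 this).1, (Finset.mem_sdiff.1 this).2⟩
      obtain ⟨a, ha, hax⟩ : ∃ a < m - k, iI a = x := by
        rcases hcover x with h | ⟨b, hb⟩
        · exact h
        · exact absurd (mem_Jset.2 ⟨b, hb⟩) hxS.2
      refine ⟨(a, (S ∩ Jset jJ).preimage jJ hjInj.injOn), ?_, ?_⟩
      · rw [Finset.mem_product, Finset.mem_filter, Finset.mem_range, Finset.mem_powerset]
        refine ⟨⟨ha, hax ▸ hSY hxS.1⟩, ?_⟩
        intro b hb
        rw [Finset.mem_preimage] at hb ⊢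
        exact hSY (Finset.mem_inter.1 hb).1
      · rw [image_preimage' hjInj Finset.inter_subset_right, hax]
        rw [Finset.insert_eq, ← hx, Finset.sdiff_union_inter]
    · rintro ⟨a, T⟩ _
      rfl
end Split

section LChar
variable {h m k : ℕ} {iI : ℕ → Fin m} {jJ : Fin k → Fin m}

lemma val_cast_ite {R : Type*} [CommRing R] (x : ZMod 2) :
    ((x.val : R)) = if x = 1 then 1 else 0 := by
  rcases zmod2_cases x with hx | hx <;> simp [hx, ZMod.val_one]

lemma sum_bit_mul {R : Type*} [CommRing R] (y : Fin m → ZMod 2) (G : ℕ → R) (n : ℕ) :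
    (∑ α ∈ Finset.range n, ((y (iI α)).val : R) * G α)
      = ∑ α ∈ (Finset.range n).filter (fun a => iI a ∈ suppF y), G α := by
  rw [Finset.sum_filter]
  apply Finset.sum_congr rfl
  intro a _
  rw [val_cast_ite]
  by_cases hy : iI a ∈ suppF y
  · rw [if_pos (mem_suppF.1 hy), if_pos hy, one_mul]
  · rw [if_neg (fun hh => hy (mem_suppF.2 hh)), if_neg hy, zero_mul]

lemma preimage_suppF (hjInj : Function.Injective jJ) (y : Fin m → ZMod 2) :
    (suppF y).preimage jJ hjInj.injOn = suppF (fun b => y (jJ b)) := by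
  ext b
  rw [Finset.mem_preimage, mem_suppF, mem_suppF]

lemma lcode_eval (hjInj : Function.Injective jJ)
    (hiInj : Set.InjOn iI (Set.Iio (m - k)))
    (hdisj : ∀ a < m - k, ∀ b : Fin k, iI a ≠ jJ b)
    (hcover : ∀ v : Fin m, (∃ a < m - k, iI a = v) ∨ ∃ b : Fin k, jJ b = v)
    (c : Finset (Fin m) → ZMod (2 ^ h))
    (hc : ∀ S, 2 ≤ (S \ Jset jJ).card → c S = 0) (i : Fin (2 ^ m)) :
    anfVec h m c i =
      (∑ α ∈ Finset.range (m - k), ((bits m i.val (iI α)).val : ZMod (2 ^ h)) *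
          (∑ T ∈ (suppF (fun b => bits m i.val (jJ b))).powerset,
            c (insert (iI α) (T.image jJ))))
        + ∑ T ∈ (suppF (fun b => bits m i.val (jJ b))).powerset, c (T.image jJ) := by
  rw [anfVec_eval, split_sum hjInj hiInj hdisj hcover _ c hc, preimage_suppF hjInj,
    sum_bit_mul, add_comm]

/-- the index `a` such that `iI a = x` -/
noncomputable def idxOf (m k : ℕ) (iI : ℕ → Fin m) (x : Fin m) : ℕ :=
  if hx : ∃ a, a < m - k ∧ iI a = x then hx.choose else 0

lemma idxOf_iI (hiInj : Set.InjOn iI (Set.Iio (m - k))) {a : ℕ} (ha : a < m - k) :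
    idxOf m k iI (iI a) = a := by
  have hx : ∃ a', a' < m - k ∧ iI a' = iI a := ⟨a, ha, rfl⟩
  rw [idxOf, dif_pos hx]
  exact hiInj hx.choose_spec.1 ha hx.choose_spec.2

lemma mem_LCode_iff (hjInj : Function.Injective jJ)
    (hiInj : Set.InjOn iI (Set.Iio (m - k)))
    (hdisj : ∀ a < m - k, ∀ b : Fin k, iI a ≠ jJ b)
    (hcover : ∀ v : Fin m, (∃ a < m - k, iI a = v) ∨ ∃ b : Fin k, jJ b = v)
    (v : Fin (2 ^ m) → ZMod (2 ^ h)) :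
    v ∈ LCode h m k iI jJ ↔
      ∃ c : Finset (Fin m) → ZMod (2 ^ h),
        (∀ S, 2 ≤ (S \ Jset jJ).card → c S = 0) ∧ v = anfVec h m c := by
  classical
  have hiIJ : ∀ a, a < m - k → iI a ∉ Jset jJ := by
    intro a ha hmem
    obtain ⟨b, hb⟩ := mem_Jset.1 hmem
    exact hdisj a ha b hb.symm
  have himJ : ∀ T : Finset (Fin k), T.image jJ ⊆ Jset jJ := by
    intro T x hx
    obtain ⟨b, _, rfl⟩ := Finset.mem_image.1 hx
    exact mem_Jset.2 ⟨b, rfl⟩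
  constructor
  · rintro ⟨g, g', rfl⟩
    set c : Finset (Fin m) → ZMod (2 ^ h) := fun S =>
      if hS : S ⊆ Jset jJ then anfC g' (S.preimage jJ hjInj.injOn)
      else if h1 : (S \ Jset jJ).card = 1 then
        anfC (g (idxOf m k iI ((S \ Jset jJ).min' (Finset.card_pos.1 (by rw [h1]; norm_num)))))
          ((S ∩ Jset jJ).preimage jJ hjInj.injOn)
      else 0 with hcdef
    have hc : ∀ S, 2 ≤ (S \ Jset jJ).card → c S = 0 := by
      intro S h2
      have hns : ¬ S ⊆ Jset jJ := by
        intro hsub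
        rw [← Finset.sdiff_eq_empty_iff_subset] at hsub
        rw [hsub] at h2
        simp at h2
      rw [hcdef]
      dsimp only
      rw [dif_neg hns, dif_neg (by omega)]
    have hcA : ∀ T : Finset (Fin k), c (T.image jJ) = anfC g' T := by
      intro T
      rw [hcdef]
      dsimp only
      rw [dif_pos (himJ T), preimage_image hjInj]
    have hcB : ∀ (a : ℕ), a < m - k → ∀ T : Finset (Fin k),
        c (insert (iI a) (T.image jJ)) = anfC (g a) T := by
      intro a ha T
      have hsd : (insert (iI a) (T.image jJ)) \ Jset jJ = {iI a} :=
        insert_sdiff_J (hiIJ a ha) (himJ T)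
      have hns : ¬ insert (iI a) (T.image jJ) ⊆ Jset jJ := by
        intro hsub
        exact hiIJ a ha (hsub (Finset.mem_insert_self _ _))
      have h1 : ((insert (iI a) (T.image jJ)) \ Jset jJ).card = 1 := by
        rw [hsd]; simp
      rw [hcdef]
      dsimp only
      rw [dif_neg hns, dif_pos h1]
      have hall : ∀ z ∈ (insert (iI a) (T.image jJ)) \ Jset jJ, z = iI a := by
        intro z hz
        rw [hsd] at hz
        exact Finset.mem_singleton.1 hz
      have hmin : ((insert (iI a) (T.image jJ)) \ Jset jJ).min'
          (Finset.card_pos.1 (by rw [h1]; norm_num)) = iI a :=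
        hall _ (Finset.min'_mem _ _)
      rw [hmin, idxOf_iI hiInj ha, insert_inter_J (hiIJ a ha) (himJ T), preimage_image hjInj]
    refine ⟨c, hc, ?_⟩
    funext i
    rw [lcode_eval hjInj hiInj hdisj hcover c hc i]
    congr 1
    · apply Finset.sum_congr rfl
      intro a ha
      rw [Finset.mem_range] at ha
      congr 1
      rw [Finset.sum_congr rfl (fun T _ => hcB a ha T), anfC_zeta, indic_suppF]
    · rw [Finset.sum_congr rfl (fun T _ => hcA T), anfC_zeta, indic_suppF]
  · rintro ⟨c, hc, rfl⟩
    refine ⟨fun a y => ∑ T : Finset (Fin k), c (insert (iI a) (T.image jJ)) *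
        ∏ b ∈ T, ((y b).val : ZMod (2 ^ h)),
      fun y => ∑ T : Finset (Fin k), c (T.image jJ) * ∏ b ∈ T, ((y b).val : ZMod (2 ^ h)), ?_⟩
    funext i
    rw [lcode_eval hjInj hiInj hdisj hcover c hc i]
    congr 1
    · apply Finset.sum_congr rfl
      intro a _
      congr 1
      dsimp only
      exact (eval_anf _ _).symm
    · dsimp only
      exact (eval_anf _ _).symm
end LChar

section Count

lemma card_range_pow_mul (n d : ℕ) (hd : d ≤ n) :
    Nat.card ↥(Set.range (fun u : ZMod (2 ^ n) => (2 : ZMod (2 ^ n)) ^ d * u)) = 2 ^ (n - d) := by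
  have hset : Set.range (fun u : ZMod (2 ^ n) => (2 : ZMod (2 ^ n)) ^ d * u)
      = (AddSubgroup.zmultiples ((2 : ZMod (2 ^ n)) ^ d) : Set (ZMod (2 ^ n))) := by
    ext x
    rw [SetLike.mem_coe, AddSubgroup.mem_zmultiples_iff]
    constructor
    · rintro ⟨u, rfl⟩
      refine ⟨(u.val : ℤ), ?_⟩
      rw [zsmul_eq_mul]
      push_cast
      rw [mul_comm]
      congr 1
      simp [ZMod.natCast_val, ZMod.cast_id]
    · rintro ⟨z, rfl⟩
      exact ⟨(z : ZMod (2 ^ n)), by rw [zsmul_eq_mul, mul_comm]⟩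
  rw [hset, SetLike.coe_sort_coe, Nat.card_zmultiples]
  have h2 : (2 : ZMod (2 ^ n)) ^ d = ((2 ^ d : ℕ) : ZMod (2 ^ n)) := by push_cast; ring
  rw [h2, ZMod.addOrderOf_coe _ (by positivity : (2:ℕ) ^ n ≠ 0)]
  rw [Nat.gcd_eq_right (pow_dvd_pow 2 hd), Nat.pow_div hd (by norm_num)]

lemma sum_powerset_card {ι M : Type*} [DecidableEq ι] [AddCommMonoid M]
    (s : Finset ι) (w : ℕ → M) :
    ∑ T ∈ s.powerset, w T.card = ∑ j ∈ Finset.range (s.card + 1), s.card.choose j • w j := by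
  rw [Finset.sum_powerset]
  apply Finset.sum_congr rfl
  intro j _
  rw [Finset.sum_congr rfl (fun T hT => by rw [(Finset.mem_powersetCard.1 hT).2]),
    Finset.sum_const, Finset.card_powersetCard]

lemma sum_choose_two (n : ℕ) (W : ℕ → ℕ) :
    (∑ j ∈ Finset.range (n + 1), n.choose j * (if j ≤ 1 then W j else 0))
      = W 0 + n * W 1 := by
  have key : ∀ j, n.choose j * (if j ≤ 1 then W j else 0)
      = (if j = 0 then n.choose j * W j else 0) + (if j = 1 then n.choose j * W j else 0) := by
    intro j
    rcases Nat.lt_or_ge j 2 with hj | hj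
    · interval_cases j <;> simp
    · rw [if_neg (by omega), if_neg (by omega), if_neg (by omega)]
      simp
  rw [Finset.sum_congr rfl (fun j _ => key j), Finset.sum_add_distrib,
    Finset.sum_ite_eq' (Finset.range (n+1)) 0, Finset.sum_ite_eq' (Finset.range (n+1)) 1]
  rcases Nat.eq_zero_or_pos n with rfl | hn
  · simp
  · rw [if_pos (Finset.mem_range.2 (by omega)), if_pos (Finset.mem_range.2 (by omega))]
    simp [Nat.choose_one_right]

lemma sumD0 {h p r k : ℕ} (hph : p < h) (hpr : p ≤ r) :
    (∑ j ∈ Finset.range (k + 1), k.choose j * (if j ≤ r then h - (j - (r - p)) else 0))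
      = ∑ i ∈ Finset.range (r - p + 1), h * k.choose i
        + ∑ i ∈ Finset.Icc 1 p, (h - i) * k.choose (i + (r - p)) := by
  set φ : ℕ → ℕ := fun j => if j ≤ r then h - (j - (r - p)) else 0 with hφ
  have hN : ∑ j ∈ Finset.range (k + 1), k.choose j * φ j
      = ∑ j ∈ Finset.range (k + r + 2), k.choose j * φ j := by
    apply Finset.sum_subset (Finset.range_subset_range.2 (by omega))
    intro j _ hj
    rw [Finset.mem_range, not_lt] at hj
    rw [Nat.choose_eq_zero_of_lt (by omega), zero_mul]
  rw [hN, ← Finset.sum_range_add_sum_Ico _ (by omega : r + 1 ≤ k + r + 2)]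
  have hzero : ∑ j ∈ Finset.Ico (r + 1) (k + r + 2), k.choose j * φ j = 0 := by
    apply Finset.sum_eq_zero
    intro j hj
    rw [Finset.mem_Ico] at hj
    rw [hφ]
    simp only
    rw [if_neg (by omega), mul_zero]
  rw [hzero, add_zero, ← Finset.sum_range_add_sum_Ico _ (by omega : r - p + 1 ≤ r + 1)]
  congr 1
  · apply Finset.sum_congr rfl
    intro j hj
    rw [Finset.mem_range] at hj
    rw [hφ]
    simp only
    rw [if_pos (by omega)]
    have hz : j - (r - p) = 0 := by omega
    rw [hz, Nat.sub_zero, mul_comm]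
  · rw [Finset.sum_Ico_eq_sum_range]
    have hIcc : Finset.Icc 1 p = Finset.Ico 1 (p + 1) := by
      rw [Finset.Ico_add_one_right_eq_Icc]
    rw [hIcc, Finset.sum_Ico_eq_sum_range]
    have hlen : r + 1 - (r - p + 1) = p := by omega
    have hlen2 : p + 1 - 1 = p := by omega
    rw [hlen, hlen2]
    apply Finset.sum_congr rfl
    intro i hi
    rw [Finset.mem_range] at hi
    rw [hφ]
    simp only
    rw [if_pos (by omega)]
    have e1 : r - p + 1 + i - (r - p) = i + 1 := by omega
    have e2 : r - p + 1 + i = 1 + i + (r - p) := by omega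
    rw [e1, e2, mul_comm]
    congr 1
    omega

lemma sumD1 {h p r k : ℕ} (hph : p < h) (hpr : p ≤ r) :
    (∑ j ∈ Finset.range (k + 1), k.choose j * (if j + 1 ≤ r then h - (j + 1 - (r - p)) else 0))
      = ∑ i ∈ Finset.range (r - p), h * k.choose i
        + ∑ i ∈ Finset.Icc 1 p, (h - i) * k.choose (i + (r - p) - 1) := by
  set φ : ℕ → ℕ := fun j => if j + 1 ≤ r then h - (j + 1 - (r - p)) else 0 with hφ
  have hN : ∑ j ∈ Finset.range (k + 1), k.choose j * φ j
      = ∑ j ∈ Finset.range (k + r + 2), k.choose j * φ j := by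
    apply Finset.sum_subset (Finset.range_subset_range.2 (by omega))
    intro j _ hj
    rw [Finset.mem_range, not_lt] at hj
    rw [Nat.choose_eq_zero_of_lt (by omega), zero_mul]
  rw [hN, ← Finset.sum_range_add_sum_Ico _ (by omega : r ≤ k + r + 2)]
  have hzero : ∑ j ∈ Finset.Ico r (k + r + 2), k.choose j * φ j = 0 := by
    apply Finset.sum_eq_zero
    intro j hj
    rw [Finset.mem_Ico] at hj
    rw [hφ]
    simp only
    rw [if_neg (by omega), mul_zero]
  rw [hzero, add_zero, ← Finset.sum_range_add_sum_Ico _ (by omega : r - p ≤ r)]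
  congr 1
  · apply Finset.sum_congr rfl
    intro j hj
    rw [Finset.mem_range] at hj
    rw [hφ]
    simp only
    rw [if_pos (by omega)]
    have hz : j + 1 - (r - p) = 0 := by omega
    rw [hz, Nat.sub_zero, mul_comm]
  · rw [Finset.sum_Ico_eq_sum_range]
    have hIcc : Finset.Icc 1 p = Finset.Ico 1 (p + 1) := by
      rw [Finset.Ico_add_one_right_eq_Icc]
    rw [hIcc, Finset.sum_Ico_eq_sum_range]
    have hlen : r - (r - p) = p := by omega
    have hlen2 : p + 1 - 1 = p := by omega
    rw [hlen, hlen2]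
    apply Finset.sum_congr rfl
    intro i hi
    rw [Finset.mem_range] at hi
    rw [hφ]
    simp only
    rw [if_pos (by omega)]
    have e1 : r - p + i + 1 - (r - p) = i + 1 := by omega
    have e2 : r - p + i = 1 + i + (r - p) - 1 := by omega
    rw [e1, e2, mul_comm]
    congr 1
    omega

end Count

lemma sum_eS {h p r m k : ℕ} (hph : p < h) (hpr : p ≤ r) (hkm : k ≤ m)
    {jJ : Fin k → Fin m} (hjInj : Function.Injective jJ) :
    (∑ S : Finset (Fin m),
        if (S \ Jset jJ).card ≤ 1 ∧ S.card ≤ r then h - (S.card - (r - p)) else 0)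
      = (∑ i ∈ Finset.range (r - p + 1), h * k.choose i
          + ∑ i ∈ Finset.Icc 1 p, (h - i) * k.choose (i + (r - p)))
        + (m - k) * (∑ i ∈ Finset.range (r - p), h * k.choose i
          + ∑ i ∈ Finset.Icc 1 p, (h - i) * k.choose (i + (r - p) - 1)) := by
  classical
  set J := Jset jJ with hJ
  set φ : ℕ → ℕ := fun j => if j ≤ r then h - (j - (r - p)) else 0 with hφ
  have hJcard : J.card = k := by
    rw [hJ, Jset, Finset.card_image_of_injective _ hjInj, Finset.card_univ, Fintype.card_fin]
  have hJc : Jᶜ.card = m - k := by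
    rw [Finset.card_compl, hJcard, Fintype.card_fin]
  have hstep0 : ∀ S : Finset (Fin m),
      (if (S \ J).card ≤ 1 ∧ S.card ≤ r then h - (S.card - (r - p)) else 0)
        = (if (S \ J).card ≤ 1 then φ S.card else 0) := by
    intro S
    by_cases h1 : (S \ J).card ≤ 1
    · by_cases h2 : S.card ≤ r
      · rw [if_pos ⟨h1, h2⟩, if_pos h1, hφ]
        simp only
        rw [if_pos h2]
      · rw [if_neg (fun hh => h2 hh.2), if_pos h1, hφ]
        simp only
        rw [if_neg h2]
    · rw [if_neg (fun hh => h1 hh.1), if_neg h1]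
  rw [Finset.sum_congr rfl (fun S _ => hstep0 S)]
  have hbij : (∑ S : Finset (Fin m), if (S \ J).card ≤ 1 then φ S.card else 0)
      = ∑ q ∈ Jᶜ.powerset ×ˢ J.powerset,
          (if q.1.card ≤ 1 then φ (q.1.card + q.2.card) else 0) := by
    apply Finset.sum_nbij' (fun S => (S \ J, S ∩ J)) (fun q => q.1 ∪ q.2)
    · intro S _
      rw [Finset.mem_product, Finset.mem_powerset, Finset.mem_powerset]
      constructor
      · intro z hz
        rw [Finset.mem_compl]
        exact (Finset.mem_sdiff.1 hz).2
      · exact Finset.inter_subset_right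
    · intro q _
      exact Finset.mem_univ _
    · intro S _
      exact Finset.sdiff_union_inter S J
    · rintro ⟨A, B⟩ hq
      rw [Finset.mem_product, Finset.mem_powerset, Finset.mem_powerset] at hq
      obtain ⟨hA, hB⟩ := hq
      have hAJ : ∀ z ∈ A, z ∉ J := fun z hz => Finset.mem_compl.1 (hA hz)
      have e1 : (A ∪ B) \ J = A := by
        ext z
        rw [Finset.mem_sdiff, Finset.mem_union]
        constructor
        · rintro ⟨hz | hz, hzJ⟩
          · exact hz
          · exact absurd (hB hz) hzJ
        · intro hz
          exact ⟨Or.inl hz, hAJ z hz⟩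
      have e2 : (A ∪ B) ∩ J = B := by
        ext z
        rw [Finset.mem_inter, Finset.mem_union]
        constructor
        · rintro ⟨hz | hz, hzJ⟩
          · exact absurd hzJ (hAJ z hz)
          · exact hz
        · intro hz
          exact ⟨Or.inr hz, hB hz⟩
      rw [e1, e2]
    · intro S _
      have : (S \ J).card + (S ∩ J).card = S.card := Finset.card_sdiff_add_card_inter S J
      rw [← this]
  rw [hbij, Finset.sum_product]
  have hinner : ∀ A : Finset (Fin m),
      (∑ B ∈ J.powerset, if A.card ≤ 1 then φ (A.card + B.card) else 0)
        = (if A.card ≤ 1 then (∑ i ∈ Finset.range (k + 1), k.choose i * φ (A.card + i)) else 0) := by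
    intro A
    by_cases h1 : A.card ≤ 1
    · simp only [if_pos h1]
      rw [sum_powerset_card J (fun j => φ (A.card + j)), hJcard]
      apply Finset.sum_congr rfl
      intro i _
      rw [smul_eq_mul]
    · simp only [if_neg h1]
      exact Finset.sum_const_zero
  rw [Finset.sum_congr rfl (fun A _ => hinner A)]
  rw [sum_powerset_card Jᶜ
    (fun j => if j ≤ 1 then (∑ i ∈ Finset.range (k + 1), k.choose i * φ (j + i)) else 0), hJc]
  have := sum_choose_two (m - k) (fun j => ∑ i ∈ Finset.range (k + 1), k.choose i * φ (j + i))
  rw [Finset.sum_congr rfl (fun j _ => by rw [smul_eq_mul]), this]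
  congr 1
  · rw [← sumD0 hph hpr (k := k)]
    apply Finset.sum_congr rfl
    intro i _
    rw [hφ, zero_add]
  · congr 1
    rw [← sumD1 hph hpr (k := k)]
    apply Finset.sum_congr rfl
    intro i _
    rw [hφ]
    simp only
    rw [add_comm 1 i]


/-- Size of `A_{2^h}^p(k,r,m) = L_{2^h}(k,m) ∩ ZRM_{2^h}^p(r,m)`:
`log₂|A| = ∑_{i=0}^{r-p} h·C(k,i) + ∑_{i=1}^p (h-i)·C(k,i+r-p)
  + (m-k)·(∑_{i=0}^{r-p-1} h·C(k,i) + ∑_{i=1}^p (h-i)·C(k,i+r-p-1))`. -/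
theorem stmt_13 (h p r m k : ℕ) (hph : p < h) (hpr : p ≤ r) (hkm : k ≤ m)
    (iI : ℕ → Fin m) (jJ : Fin k → Fin m)
    (hiInj : Set.InjOn iI (Set.Iio (m - k))) (hjInj : Function.Injective jJ)
    (hdisj : ∀ a < m - k, ∀ b : Fin k, iI a ≠ jJ b)
    (hcover : ∀ v : Fin m, (∃ a < m - k, iI a = v) ∨ ∃ b : Fin k, jJ b = v) :
    Nat.card (LCode h m k iI jJ ∩ ZRM h p r m : Set (Fin (2 ^ m) → ZMod (2 ^ h)))
      = 2 ^ ((∑ i ∈ Finset.range (r - p + 1), h * k.choose i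
              + ∑ i ∈ Finset.Icc 1 p, (h - i) * k.choose (i + (r - p)))
             + (m - k) * (∑ i ∈ Finset.range (r - p), h * k.choose i
              + ∑ i ∈ Finset.Icc 1 p, (h - i) * k.choose (i + (r - p) - 1))) := by
  classical
  set J := Jset jJ with hJ
  set A : Finset (Fin m) → Set (ZMod (2 ^ h)) := fun S =>
    if (S \ J).card ≤ 1 ∧ S.card ≤ r then
      Set.range (fun u : ZMod (2 ^ h) => (2 : ZMod (2 ^ h)) ^ (S.card - (r - p)) * u)
    else {0} with hA
  set D : Set (Finset (Fin m) → ZMod (2 ^ h)) := {c | ∀ S, c S ∈ A S} with hD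
  have hcond : ∀ c : Finset (Fin m) → ZMod (2 ^ h),
      ((∀ S, 2 ≤ (S \ J).card → c S = 0) ∧ zrmCond h p r m c) ↔ c ∈ D := by
    intro c
    constructor
    · rintro ⟨hs, hz⟩ S
      rw [hA]
      simp only
      by_cases hok : (S \ J).card ≤ 1 ∧ S.card ≤ r
      · rw [if_pos hok]
        by_cases hrp : r - p < S.card
        · obtain ⟨u, hu⟩ := (hz S).2 hrp hok.2
          exact ⟨u, hu.symm⟩
        · have h0 : S.card - (r - p) = 0 := by omega
          exact ⟨c S, by simp [h0]⟩
      · rw [if_neg hok]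
        rw [Set.mem_singleton_iff]
        rcases Nat.lt_or_ge 1 (S \ J).card with h1 | h1
        · exact hs S h1
        · exact (hz S).1 (by omega)
    · intro hcD
      constructor
      · intro S h2
        have := hcD S
        rw [hA] at this
        simp only at this
        rw [if_neg (fun hh => by omega)] at this
        exact Set.mem_singleton_iff.1 this
      · intro S
        constructor
        · intro hr
          have := hcD S
          rw [hA] at this
          simp only at this
          rw [if_neg (fun hh => by omega)] at this
          exact Set.mem_singleton_iff.1 this
        · intro h1 h2
          have := hcD S
          rw [hA] at this
          simp only at this
          by_cases hok : (S \ J).card ≤ 1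
          · rw [if_pos ⟨hok, h2⟩] at this
            obtain ⟨u, hu⟩ := this
            exact ⟨u, hu.symm⟩
          · rw [if_neg (fun hh => hok hh.1)] at this
            exact ⟨0, by rw [mul_zero, ← Set.mem_singleton_iff]; exact this⟩
  have hinter : (LCode h m k iI jJ ∩ ZRM h p r m : Set (Fin (2 ^ m) → ZMod (2 ^ h)))
      = anfVec h m '' D := by
    ext v
    simp only [Set.mem_inter_iff, Set.mem_image]
    rw [mem_LCode_iff hjInj hiInj hdisj hcover]
    constructor
    · rintro ⟨⟨c1, hs1, rfl⟩, c2, hz2, he⟩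
      have hc12 : c1 = c2 := anfVec_inj h m he
      refine ⟨c1, (hcond c1).1 ⟨hs1, ?_⟩, rfl⟩
      rw [hc12]
      exact hz2
    · rintro ⟨c, hcD, rfl⟩
      obtain ⟨hs, hz⟩ := (hcond c).2 hcD
      exact ⟨⟨c, hs, rfl⟩, ⟨c, hz, rfl⟩⟩
  rw [hinter]
  have hanfInj : Function.Injective (anfVec h m) := fun c c' hcc => anfVec_inj h m hcc
  rw [Nat.card_coe_set_eq, Set.ncard_image_of_injective D hanfInj, ← Nat.card_coe_set_eq]
  have hDcard : Nat.card ↥D = ∏ S : Finset (Fin m), Nat.card ↥(A S) := by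
    rw [← Nat.card_pi]
    apply Nat.card_congr
    exact { toFun := fun c S => ⟨c.1 S, c.2 S⟩,
            invFun := fun f => ⟨fun S => (f S).1, fun S => (f S).2⟩,
            left_inv := fun c => rfl, right_inv := fun f => rfl }
  rw [hDcard]
  have hAcard : ∀ S : Finset (Fin m), Nat.card ↥(A S)
      = 2 ^ (if (S \ J).card ≤ 1 ∧ S.card ≤ r then h - (S.card - (r - p)) else 0) := by
    intro S
    rw [hA]
    simp only
    by_cases hok : (S \ J).card ≤ 1 ∧ S.card ≤ r
    · rw [if_pos hok, if_pos hok]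
      exact card_range_pow_mul h (S.card - (r - p)) (by omega)
    · rw [if_neg hok, if_neg hok, pow_zero]
      rw [Nat.card_coe_set_eq, Set.ncard_singleton]
  rw [Finset.prod_congr rfl (fun S _ => hAcard S), Finset.prod_pow_eq_pow_sum]
  congr 1
  exact sum_eS hph hpr hkm hjInj
end

section
/- Let q = 2^h, h > p, p ≤ r ≤ m, and let A_{2^h}^p(k,r,m) = L_{2^h}(k,m) ∩ ZRM_{2^h}^p(r,m). For any fixed vector b ∈ R_{2^h}(k,m), the Class I code C = { b + a : a ∈ A_{2^h}^p(k,r,m) } satisfies: for any two distinct codewords u, v ∈ C, the Hamming distance between u and v is at least 2^{m-r} and the Lee distance between u and v is at least 2^{m-r+p}. -/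
open Finset

/-- The function `b` and the set `R_{2^h}(k,m)` of coset representatives. -/
def bFun (h m k : ℕ) (jJ : Fin k → Fin m) (π : (Fin k → ZMod 2) → ℕ → Fin m)
    (y : Fin m → ZMod 2) : ZMod (2 ^ h) :=
  ((2 ^ (h - 1) * ∑ d : Fin k → ZMod 2,
      (∑ α ∈ Finset.range (m - k - 1), (y (π d α)).val * (y (π d (α + 1))).val)
        * ∏ b : Fin k, (y (jJ b)).val ^ (d b).val * (1 - (y (jJ b)).val) ^ (1 - (d b).val)
    : ℕ) : ZMod (2 ^ h))

def RCode (h m k : ℕ) (iI : ℕ → Fin m) (jJ : Fin k → Fin m) :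
    Set (Fin (2 ^ m) → ZMod (2 ^ h)) :=
  {v | ∃ π : (Fin k → ZMod 2) → ℕ → Fin m,
    (∀ d, Set.InjOn (π d) (Set.Iio (m - k)) ∧
      (π d) '' Set.Iio (m - k) = iI '' Set.Iio (m - k)) ∧
    v = fun i => bFun h m k jJ π (bits m i.val)}

/-- Hamming distance. -/
def distH {n q : ℕ} (u v : Fin n → ZMod q) : ℕ := (Finset.univ.filter fun i => u i ≠ v i).card

/-- Lee weight. -/
def wtL {n q : ℕ} (v : Fin n → ZMod q) : ℕ := ∑ i : Fin n, min (v i).val (q - (v i).val)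

/-!
The difference of two codewords of `b + A` lies in `ZRM_{2^h}^p(r,m)`, so it suffices to bound
the weights of a nonzero `v = ∑_S e_S x^S` in `ZRM`. Let `2^j` be the largest power of two
dividing every coefficient and write `e = 2^j e'`. Reducing `e'` mod 2 gives a nonzero Boolean
function `f`, and `v(x) = 2^j · (odd)` wherever `f(x) ≠ 0`, so each such `x` carries Lee weight at
least `2^j`. A coefficient of degree `r-p+i` is divisible by `2^i`, hence `f` has degree at most
`d = r - p + min(p, j)`, and a nonzero Boolean function of degree at most `d` is nonzero at
`2^{m-d}` points or more (summing it over the subcube spanned by a maximal monomial isolates that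
monomial's coefficient). Finally `2^{m-d} ≥ 2^{m-r}` and `2^j · 2^{m-d} ≥ 2^{m-r+p}`.
-/

section BooleanFunction

variable {σ : Type*} [Fintype σ]

def anf {R : Type*} [CommSemiring R] (c : Finset σ → R) (x : σ → R) : R :=
  ∑ S, c S * ∏ α ∈ S, x α

lemma map_anf {R R' : Type*} [CommSemiring R] [CommSemiring R'] (φ : R →+* R')
    (c : Finset σ → R) (x : σ → R) : φ (anf c x) = anf (φ ∘ c) (φ ∘ x) := by
  simp [anf, map_sum, map_mul, map_prod]

lemma anf_const_mul {R : Type*} [CommSemiring R] (a : R) (c : Finset σ → R) (x : σ → R) :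
    anf (fun S => a * c S) x = a * anf c x := by
  simp only [anf, mul_sum, mul_assoc]

variable [DecidableEq σ]

lemma sum_prod_piFinset_subcube (S₀ T : Finset σ) (y : σ → ZMod 2) :
    ∑ x ∈ Fintype.piFinset (fun α => if α ∈ S₀ then univ else {y α}), ∏ α ∈ T, x α
      = if S₀ ⊆ T then ∏ α ∈ S₀ᶜ ∩ T, y α else 0 := by
  -- over `ZMod 2`, `∑ t, t = 1` while `∑ t, 1 = 2 = 0`
  have hfactor : ∀ α, ∑ t ∈ (if α ∈ S₀ then univ else {y α}), (if α ∈ T then t else 1)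
      = if α ∈ S₀ then (if α ∈ T then 1 else 0) else (if α ∈ T then y α else 1) := by
    intro α
    split_ifs <;> first | rfl | simp
  simp_rw [← prod_ite_mem_eq T]
  rw [← prod_univ_sum _ (fun α t => if α ∈ T then t else 1)]
  simp_rw [hfactor]
  rw [prod_ite]
  simp [prod_boole, prod_ite_mem, subset_iff, filter_not, compl_eq_univ_sdiff]

lemma sum_anf_piFinset_subcube_of_maximal (c : Finset σ → ZMod 2) (S₀ : Finset σ)
    (hmax : ∀ T, S₀ ⊂ T → c T = 0) (y : σ → ZMod 2) :
    ∑ x ∈ Fintype.piFinset (fun α => if α ∈ S₀ then univ else {y α}), anf c x = c S₀ := by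
  simp_rw [anf]
  rw [sum_comm]
  simp_rw [← mul_sum, sum_prod_piFinset_subcube]
  rw [sum_eq_single S₀]
  · simp [inter_comm, inter_compl]
  · intro T _ hT
    split_ifs with hsub
    · rw [hmax T (ssubset_of_subset_of_ne hsub (Ne.symm hT)), zero_mul]
    · rw [mul_zero]
  · simp

lemma card_piFinset_subcube_zero (S₀ : Finset σ) :
    #(Fintype.piFinset fun α => if α ∈ S₀ then ({0} : Finset (ZMod 2)) else univ)
      = 2 ^ (Fintype.card σ - #S₀) := by
  rw [Fintype.card_piFinset]
  simp [apply_ite, prod_ite, filter_not, card_univ_sdiff]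

theorem two_pow_card_sub_le_card_anf_ne_zero (c : Finset σ → ZMod 2) (hc : c ≠ 0) {d : ℕ}
    (hdeg : ∀ S, c S ≠ 0 → #S ≤ d) :
    2 ^ (Fintype.card σ - d) ≤ #{x | anf c x ≠ 0} := by
  obtain ⟨S₀, hS₀⟩ := exists_maximal (s := {S | c S ≠ 0}) <| by
    obtain ⟨S, hS⟩ := Function.ne_iff.mp hc
    exact ⟨S, by simpa using hS⟩
  have hc₀ : c S₀ ≠ 0 := by simpa using hS₀.prop
  have hmax : ∀ T, S₀ ⊂ T → c T = 0 := fun T hT => by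
    by_contra hcT
    exact hT.not_subset (hS₀.2 (by simpa using hcT) hT.subset)
  let proj : (σ → ZMod 2) → σ → ZMod 2 := fun x α => if α ∈ S₀ then 0 else x α
  have hcover : (Fintype.piFinset fun α => if α ∈ S₀ then ({0} : Finset (ZMod 2)) else univ)
      ⊆ image proj {x | anf c x ≠ 0} := by
    intro y hy
    obtain ⟨x, hx, hcx⟩ := exists_ne_zero_of_sum_ne_zero
      ((sum_anf_piFinset_subcube_of_maximal c S₀ hmax y).trans_ne hc₀)
    refine mem_image.mpr ⟨x, by simpa using hcx, funext fun α => ?_⟩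
    have hyα := Fintype.mem_piFinset.mp hy α
    have hxα := Fintype.mem_piFinset.mp hx α
    by_cases hα : α ∈ S₀ <;> simp_all [proj]
  calc 2 ^ (Fintype.card σ - d) ≤ 2 ^ (Fintype.card σ - #S₀) :=
        Nat.pow_le_pow_right two_pos (Nat.sub_le_sub_left (hdeg S₀ hc₀) _)
    _ = _ := (card_piFinset_subcube_zero S₀).symm
    _ ≤ _ := card_le_card hcover
    _ ≤ _ := card_image_le

end BooleanFunction

-- `ZMod 2` is by definition `Fin 2`, so base-2 digits are already points of `ZMod 2`.
lemma bits_eq_finFunctionFinEquiv_symm (m : ℕ) (i : Fin (2 ^ m)) :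
    bits m i = finFunctionFinEquiv.symm i := by
  funext j
  apply Fin.ext
  rw [finFunctionFinEquiv_symm_apply_val, bits, Nat.testBit_eq_decide_div_mod_eq]
  rcases Nat.mod_two_eq_zero_or_one (i / 2 ^ (j : ℕ)) with h | h <;> simp [h] <;> rfl

lemma card_filter_bits {m : ℕ} (P : (Fin m → ZMod 2) → Prop) [DecidablePred P] :
    #{i : Fin (2 ^ m) | P (bits m i)} = #{x | P x} :=
  card_equiv finFunctionFinEquiv.symm fun i => by
    simp only [mem_filter_univ, bits_eq_finFunctionFinEquiv_symm]
    rfl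

namespace ZMod

def leeWeight {q : ℕ} (a : ZMod q) : ℕ := min a.val (q - a.val)

variable {h : ℕ}

lemma val_two_pow (j : ℕ) : ((2 : ZMod (2 ^ h)) ^ j).val = 2 ^ j % 2 ^ h := by
  rw [← val_natCast (2 ^ h) (2 ^ j)]
  push_cast
  rfl

lemma val_two_pow_mul {j : ℕ} (hj : j ≤ h) (w : ZMod (2 ^ h)) :
    (2 ^ j * w).val = 2 ^ j * (w.val % 2 ^ (h - j)) := by
  rw [val_mul, val_two_pow, Nat.mod_mul_mod, ← Nat.mul_mod_mul_left, ← pow_add,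
    Nat.add_sub_cancel' hj]

lemma two_pow_dvd_val_two_pow_mul {i k : ℕ} (hkh : k ≤ h) (hki : k ≤ i) (u : ZMod (2 ^ h)) :
    2 ^ k ∣ (2 ^ i * u).val := by
  rw [val_mul, val_two_pow, Nat.mod_mul_mod, Nat.dvd_mod_iff (pow_dvd_pow 2 hkh)]
  exact (pow_dvd_pow 2 hki).mul_right _

lemma val_two_pow_mul_of_odd {j : ℕ} (hj : j < h) {w : ZMod (2 ^ h)} (hw : Odd w.val) :
    ∃ k, Odd k ∧ (2 ^ j * w).val = 2 ^ j * k := by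
  refine ⟨w.val % 2 ^ (h - j), ?_, val_two_pow_mul hj.le w⟩
  rw [Nat.odd_iff, Nat.mod_mod_of_dvd _ (dvd_pow_self 2 (by omega)), ← Nat.odd_iff]
  exact hw

lemma two_pow_mul_ne_zero_of_odd {j : ℕ} (hj : j < h) {w : ZMod (2 ^ h)} (hw : Odd w.val) :
    2 ^ j * w ≠ 0 := by
  obtain ⟨k, hk, hval⟩ := val_two_pow_mul_of_odd hj hw
  rw [← val_ne_zero, hval]
  exact mul_ne_zero (by positivity) hk.pos.ne'

lemma le_of_two_pow_mul_eq {i j : ℕ} (hj : j < h) {w u : ZMod (2 ^ h)} (hw : Odd w.val)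
    (heq : 2 ^ j * w = 2 ^ i * u) : i ≤ j := by
  by_contra! hij
  obtain ⟨k, hk, hval⟩ := val_two_pow_mul_of_odd hj hw
  have hdvd := two_pow_dvd_val_two_pow_mul (by omega : j + 1 ≤ h) hij u
  rw [← heq, hval, pow_succ, Nat.mul_dvd_mul_iff_left (by positivity)] at hdvd
  exact (Nat.not_even_iff_odd.mpr hk) (even_iff_two_dvd.mpr hdvd)

lemma two_pow_le_leeWeight {j : ℕ} (hj : j ≤ h) {a : ZMod (2 ^ h)} (hdvd : 2 ^ j ∣ a.val)
    (ha : a ≠ 0) : 2 ^ j ≤ leeWeight a := by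
  have hpos : 0 < a.val := Nat.pos_of_ne_zero ((val_ne_zero a).mpr ha)
  have hlt : a.val < 2 ^ h := val_lt a
  exact le_min (Nat.le_of_dvd hpos hdvd)
    (Nat.le_of_dvd (by omega) (Nat.dvd_sub (pow_dvd_pow 2 hj) hdvd))

lemma exists_two_pow_mul_odd {ι : Type*} (e : ι → ZMod (2 ^ h)) (he : e ≠ 0) :
    ∃ j < h, ∃ e' : ι → ZMod (2 ^ h), (∀ i, e i = 2 ^ j * e' i) ∧ ∃ i, Odd (e' i).val := by
  classical
  obtain ⟨i₁, hi₁⟩ := Function.ne_iff.mp he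
  have hval : (e i₁).val ≠ 0 := (val_ne_zero _).mpr hi₁
  have hex : ∃ j, ∃ i, ¬ 2 ^ (j + 1) ∣ (e i).val := ⟨h, i₁, fun hdvd =>
    hval (Nat.eq_zero_of_dvd_of_lt hdvd ((val_lt _).trans (Nat.pow_lt_pow_succ one_lt_two)))⟩
  let j := Nat.find hex
  obtain ⟨i₀, hi₀⟩ := Nat.find_spec hex
  have hdvd : ∀ i, 2 ^ j ∣ (e i).val := by
    intro i
    rcases Nat.eq_zero_or_pos j with hj | hj
    · simp [hj]
    · have := Nat.find_min hex (show j - 1 < j by omega)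
      push Not at this
      simpa [Nat.sub_add_cancel hj] using this i
  have hjh : j < h := by
    by_contra! hjh
    exact hval (Nat.eq_zero_of_dvd_of_lt ((pow_dvd_pow 2 hjh).trans (hdvd i₁)) (val_lt _))
  refine ⟨j, hjh, fun i => ((e i).val / 2 ^ j : ℕ), fun i => ?_, i₀, ?_⟩
  · conv_lhs => rw [← natCast_zmod_val (e i), ← Nat.mul_div_cancel' (hdvd i)]
    push_cast
    rfl
  · rw [val_natCast, Nat.mod_eq_of_lt ((Nat.div_le_self _ _).trans_lt (val_lt _)), Nat.odd_iff,
      ← Nat.two_dvd_ne_zero, Nat.dvd_div_iff_mul_dvd (hdvd i₀), ← pow_succ]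
    exact hi₀

end ZMod

section ZRMCode

variable {h p r m : ℕ}

lemma anfVec_sub (c c' : Finset (Fin m) → ZMod (2 ^ h)) :
    anfVec h m (c - c') = anfVec h m c - anfVec h m c' := by
  funext i
  simp [anfVec, sub_mul, sum_sub_distrib]

lemma zrmCond.sub {c c' : Finset (Fin m) → ZMod (2 ^ h)} (hc : zrmCond h p r m c)
    (hc' : zrmCond h p r m c') : zrmCond h p r m (c - c') := by
  intro S
  refine ⟨fun hr => by simp [(hc S).1 hr, (hc' S).1 hr], fun hlo hhi => ?_⟩
  obtain ⟨u, hu⟩ := (hc S).2 hlo hhi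
  obtain ⟨u', hu'⟩ := (hc' S).2 hlo hhi
  exact ⟨u - u', by simp [hu, hu', mul_sub]⟩

lemma ZRM.sub_mem {v v' : Fin (2 ^ m) → ZMod (2 ^ h)} (hv : v ∈ ZRM h p r m)
    (hv' : v' ∈ ZRM h p r m) : v - v' ∈ ZRM h p r m := by
  obtain ⟨c, hc, rfl⟩ := hv
  obtain ⟨c', hc', rfl⟩ := hv'
  exact ⟨c - c', hc.sub hc', (anfVec_sub c c').symm⟩

lemma anfVec_apply_eq_anf (c : Finset (Fin m) → ZMod (2 ^ h)) (i : Fin (2 ^ m)) :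
    anfVec h m c i = anf c fun α => ((bits m i α).val : ZMod (2 ^ h)) := rfl

lemma natCast_val_anfVec (hh : h ≠ 0) (c : Finset (Fin m) → ZMod (2 ^ h)) (i : Fin (2 ^ m)) :
    (((anfVec h m c i).val : ℕ) : ZMod 2) = anf (fun S => ((c S).val : ZMod 2)) (bits m i) := by
  have hψ : ∀ a : ZMod (2 ^ h), ZMod.castHom (dvd_pow_self 2 hh) (ZMod 2) a = a.val := fun a => by
    rw [ZMod.castHom_apply, ZMod.cast_eq_val]
  rw [← hψ, anfVec_apply_eq_anf, map_anf]
  congr 1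
  · funext S; exact hψ _
  · funext α; simp

lemma zrmCond.card_le_of_odd {j : ℕ} (hj : j < h) {e e' : Finset (Fin m) → ZMod (2 ^ h)}
    (he : zrmCond h p r m e) (hee' : ∀ S, e S = 2 ^ j * e' S) {S : Finset (Fin m)}
    (hS : Odd (e' S).val) : #S ≤ r - p + min p j := by
  have hr : #S ≤ r := by
    by_contra! hr
    exact ZMod.two_pow_mul_ne_zero_of_odd hj hS (by rw [← hee', (he S).1 hr])
  by_cases hlo : #S ≤ r - p
  · omega
  obtain ⟨u, hu⟩ := (he S).2 (by omega) hr
  have := ZMod.le_of_two_pow_mul_eq hj hS ((hee' S).symm.trans hu)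
  omega

lemma anfVec_ne_zero_and_two_pow_le_leeWeight {j : ℕ} (hj : j < h)
    {e e' : Finset (Fin m) → ZMod (2 ^ h)} (hee' : ∀ S, e S = 2 ^ j * e' S) {i : Fin (2 ^ m)}
    (hi : anf (fun S => ((e' S).val : ZMod 2)) (bits m i) ≠ 0) :
    anfVec h m e i ≠ 0 ∧ 2 ^ j ≤ (anfVec h m e i).leeWeight := by
  have hodd : Odd (anfVec h m e' i).val := by
    rwa [← ZMod.natCast_ne_zero_iff_odd, natCast_val_anfVec (by omega)]
  have hmul : anfVec h m e i = 2 ^ j * anfVec h m e' i := by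
    simp_rw [anfVec_apply_eq_anf, ← anf_const_mul, ← hee']
  rw [hmul]
  have hne := ZMod.two_pow_mul_ne_zero_of_odd hj hodd
  exact ⟨hne, ZMod.two_pow_le_leeWeight hj.le (ZMod.two_pow_dvd_val_two_pow_mul hj.le le_rfl _) hne⟩

lemma distH_eq_card_sub_ne_zero {n q : ℕ} (u v : Fin n → ZMod q) :
    distH u v = #{i | (u - v) i ≠ 0} := by
  simp [distH, sub_ne_zero]

theorem ZRM.two_pow_le_card_ne_zero_and_wtL (hpr : p ≤ r) (hrm : r ≤ m)
    {v : Fin (2 ^ m) → ZMod (2 ^ h)} (hv : v ∈ ZRM h p r m) (hv0 : v ≠ 0) :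
    2 ^ (m - r) ≤ #{i | v i ≠ 0} ∧ 2 ^ (m - r + p) ≤ wtL v := by
  obtain ⟨e, he, rfl⟩ := hv
  have he0 : e ≠ 0 := by
    rintro rfl
    exact hv0 (funext fun i => by simp [anfVec])
  obtain ⟨j, hj, e', hee', S₀, hS₀⟩ := ZMod.exists_two_pow_mul_odd e he0
  set f : Finset (Fin m) → ZMod 2 := fun S => ((e' S).val : ZMod 2)
  set N : Finset (Fin (2 ^ m)) := {i | anf f (bits m i) ≠ 0}
  have hf : f ≠ 0 := Function.ne_iff.mpr ⟨S₀, ZMod.natCast_ne_zero_iff_odd.mpr hS₀⟩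
  have hdeg : ∀ S, f S ≠ 0 → #S ≤ r - p + min p j := fun S hS =>
    he.card_le_of_odd hj hee' (ZMod.natCast_ne_zero_iff_odd.mp hS)
  have hN : 2 ^ (m - (r - p + min p j)) ≤ #N := by
    rw [card_filter_bits (fun x => anf f x ≠ 0)]
    simpa using two_pow_card_sub_le_card_anf_ne_zero f hf hdeg
  have hpt : ∀ i ∈ N, anfVec h m e i ≠ 0 ∧ 2 ^ j ≤ (anfVec h m e i).leeWeight := fun i hi =>
    anfVec_ne_zero_and_two_pow_le_leeWeight hj hee' (mem_filter.mp hi).2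
  constructor
  · calc 2 ^ (m - r) ≤ 2 ^ (m - (r - p + min p j)) := Nat.pow_le_pow_right two_pos (by omega)
      _ ≤ #N := hN
      _ ≤ _ := card_le_card fun i hi => mem_filter.mpr ⟨mem_univ _, (hpt i hi).1⟩
  · calc 2 ^ (m - r + p) ≤ 2 ^ j * 2 ^ (m - (r - p + min p j)) := by
          rw [← pow_add]; exact Nat.pow_le_pow_right two_pos (by omega)
      _ ≤ 2 ^ j * #N := Nat.mul_le_mul_left _ hN
      _ = ∑ _i ∈ N, 2 ^ j := by rw [sum_const, smul_eq_mul, mul_comm]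
      _ ≤ ∑ i ∈ N, (anfVec h m e i).leeWeight := sum_le_sum fun i hi => (hpt i hi).2
      _ ≤ ∑ i, (anfVec h m e i).leeWeight := sum_le_sum_of_subset (filter_subset _ _)
      _ = wtL (anfVec h m e) := rfl

end ZRMCode

theorem stmt_14_general (h p r m k : ℕ) (hpr : p ≤ r) (hrm : r ≤ m)
    (iI : ℕ → Fin m) (jJ : Fin k → Fin m)
    (b : Fin (2 ^ m) → ZMod (2 ^ h))
    (u v : Fin (2 ^ m) → ZMod (2 ^ h))
    (hu : ∃ a ∈ LCode h m k iI jJ ∩ ZRM h p r m, u = b + a)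
    (hv : ∃ a ∈ LCode h m k iI jJ ∩ ZRM h p r m, v = b + a)
    (huv : u ≠ v) :
    2 ^ (m - r) ≤ distH u v ∧ 2 ^ (m - r + p) ≤ wtL (u - v) := by
  rw [distH_eq_card_sub_ne_zero]
  obtain ⟨a, ⟨-, ha⟩, rfl⟩ := hu
  obtain ⟨a', ⟨-, ha'⟩, rfl⟩ := hv
  rw [add_sub_add_left_eq_sub]
  refine ZRM.two_pow_le_card_ne_zero_and_wtL hpr hrm (ZRM.sub_mem ha ha') ?_
  exact sub_ne_zero.mpr fun haa' => huv (by rw [haa'])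

/-- Class I codes: a single coset `b + A_{2^h}^p(k,r,m)` has minimum Hamming distance at
least `2^{m-r}` and minimum Lee distance at least `2^{m-r+p}`. -/
theorem stmt_14 (h p r m k : ℕ) (hph : p < h) (hpr : p ≤ r) (hrm : r ≤ m) (hkm : k ≤ m)
    (iI : ℕ → Fin m) (jJ : Fin k → Fin m)
    (hiInj : Set.InjOn iI (Set.Iio (m - k))) (hjInj : Function.Injective jJ)
    (hdisj : ∀ a < m - k, ∀ b : Fin k, iI a ≠ jJ b)
    (hcover : ∀ v : Fin m, (∃ a < m - k, iI a = v) ∨ ∃ b : Fin k, jJ b = v)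
    (b : Fin (2 ^ m) → ZMod (2 ^ h)) (hb : b ∈ RCode h m k iI jJ)
    (u v : Fin (2 ^ m) → ZMod (2 ^ h))
    (hu : ∃ a ∈ LCode h m k iI jJ ∩ ZRM h p r m, u = b + a)
    (hv : ∃ a ∈ LCode h m k iI jJ ∩ ZRM h p r m, v = b + a)
    (huv : u ≠ v) :
    2 ^ (m - r) ≤ distH u v ∧ 2 ^ (m - r + p) ≤ wtL (u - v) :=
  stmt_14_general h p r m k hpr hrm iI jJ b u v hu hv huv
end
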